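/- Let q > 1 and α > 0 be real, and let u be real with u ∉ {α, α+1}. Let D = diag{d₁, d₂, d₃, d₄} be any invertible diagonal 4×4 complex matrix satisfying d₁d₄ = d₂d₃. Then the gauge-free trigonometric R matrix Ř(u) commutes with D ⊗ D: Ř(u)(D ⊗ D) = (D ⊗ D)Ř(u). In particular, for any r, s > 0 and real v, Ř(u) commutes with A^{r,s}(v) ⊗ A^{r,s}(v), where A^{r,s}(v) := diag{1, r^v, s^v, r^v s^v}. -/

import Mathlib

open Matrix

noncomputable section

/-- The elementary matrix `E(a,b;c,d)` on `ℂ⁴ ⊗ ℂ⁴`. -/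
def E (a b c d : Fin 4) : Matrix (Fin 4 × Fin 4) (Fin 4 × Fin 4) ℂ :=
  Matrix.single (a, b) (c, d) 1

/-- `M ⊗ I₄`, acting on the first two factors of `ℂ⁴ ⊗ ℂ⁴ ⊗ ℂ⁴`. -/
def op12 (M : Matrix (Fin 4 × Fin 4) (Fin 4 × Fin 4) ℂ) :
    Matrix (Fin 4 × Fin 4 × Fin 4) (Fin 4 × Fin 4 × Fin 4) ℂ :=
  Matrix.of fun x y => M (x.1, x.2.1) (y.1, y.2.1) * (if x.2.2 = y.2.2 then 1 else 0)

/-- `I₄ ⊗ M`, acting on the last two factors of `ℂ⁴ ⊗ ℂ⁴ ⊗ ℂ⁴`. -/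
def op23 (M : Matrix (Fin 4 × Fin 4) (Fin 4 × Fin 4) ℂ) :
    Matrix (Fin 4 × Fin 4 × Fin 4) (Fin 4 × Fin 4 × Fin 4) ℂ :=
  Matrix.of fun x y => (if x.1 = y.1 then 1 else 0) * M (x.2.1, x.2.2) (y.2.1, y.2.2)

/-- The left quantum partial trace `T(C, M)_{a,b} = Σ_{c,d} C_{d,c} M_{(c,a),(d,b)}`. -/
def ptrace (C : Matrix (Fin 4) (Fin 4) ℂ) (M : Matrix (Fin 4 × Fin 4) (Fin 4 × Fin 4) ℂ) :
    Matrix (Fin 4) (Fin 4) ℂ :=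
  Matrix.of fun a b => ∑ c : Fin 4, ∑ d : Fin 4, C d c * M (c, a) (d, b)

/-- The gauge-free trigonometric R matrix `Ř(u)` (indices shifted from 1–4 to 0–3). -/
def Rtrig (q α u : ℝ) : Matrix (Fin 4 × Fin 4) (Fin 4 × Fin 4) ℂ :=
  let b : ℝ → ℝ := fun x => (q ^ x - q ^ (-x)) / (q - q⁻¹)
  let Δ : ℝ := q - q⁻¹
  let fp : ℝ := -(2 * q) + q ^ (2 * u) * (q - q⁻¹) + q ^ (1 + 2 * α) + q ^ (-(1 + 2 * α))
  let fm : ℝ := -(2 * q⁻¹) - q ^ (-(2 * u)) * (q - q⁻¹) + q ^ (1 + 2 * α) + q ^ (-(1 + 2 * α))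
  let g : ℝ := Real.sqrt (b α * b (1 + α)) * b u / (b (α - u) * b (1 + α - u))
  E 0 0 0 0
  + ((b (α + u) / b (α - u) : ℝ) : ℂ) • (E 1 1 1 1 + E 2 2 2 2)
  + ((b (α + u) * b (1 + α + u) / (b (α - u) * b (1 + α - u)) : ℝ) : ℂ) • E 3 3 3 3
  + ((b α / b (α - u) * q ^ (-u) : ℝ) : ℂ) • (E 0 1 0 1 + E 0 2 0 2)
  + ((b α / b (α - u) * q ^ u : ℝ) : ℂ) • (E 1 0 1 0 + E 2 0 2 0)
  + ((b α * b (1 + α) / (b (α - u) * b (1 + α - u)) * q ^ (-(2 * u)) : ℝ) : ℂ) • E 0 3 0 3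
  + ((b α * b (1 + α) / (b (α - u) * b (1 + α - u)) * q ^ (2 * u) : ℝ) : ℂ) • E 3 0 3 0
  + ((fm / (Δ ^ 2 * b (α - u) * b (1 + α - u)) : ℝ) : ℂ) • E 1 2 1 2
  + ((fp / (Δ ^ 2 * b (α - u) * b (1 + α - u)) : ℝ) : ℂ) • E 2 1 2 1
  + ((b (1 + α) * b (α + u) / (b (α - u) * b (1 + α - u)) * q ^ (-u) : ℝ) : ℂ) •
      (E 1 3 1 3 + E 2 3 2 3)
  + ((b (1 + α) * b (α + u) / (b (α - u) * b (1 + α - u)) * q ^ u : ℝ) : ℂ) •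
      (E 3 1 3 1 + E 3 2 3 2)
  - ((b u / b (α - u) : ℝ) : ℂ) • (E 0 1 1 0 + E 0 2 2 0 + E 1 0 0 1 + E 2 0 0 2)
  - ((b (1 - u) * b u / (b (α - u) * b (1 + α - u)) : ℝ) : ℂ) • (E 0 3 3 0 + E 3 0 0 3)
  - ((b u ^ 2 / (b (α - u) * b (1 + α - u)) : ℝ) : ℂ) • (E 1 2 2 1 + E 2 1 1 2)
  + ((b u * b (α + u) / (b (α - u) * b (1 + α - u)) : ℝ) : ℂ) •
      (E 1 3 3 1 + E 2 3 3 2 + E 3 1 1 3 + E 3 2 2 3)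
  + ((g * q ^ (-u + 1 / 2) : ℝ) : ℂ) • (E 0 3 2 1 + E 2 1 0 3)
  - ((g * q ^ (u - 1 / 2) : ℝ) : ℂ) • (E 3 0 1 2 + E 1 2 3 0)
  + ((g * q ^ (u + 1 / 2) : ℝ) : ℂ) • (E 2 1 3 0 + E 3 0 2 1)
  - ((g * q ^ (-u - 1 / 2) : ℝ) : ℂ) • (E 1 2 0 3 + E 0 3 1 2)

namespace Matrix

theorem commute_diagonal_single {n R : Type*} [Fintype n] [DecidableEq n] [CommSemiring R]
    {d : n → R} {i j : n} (h : d i = d j) (c : R) :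
    Commute (diagonal d) (single i j c) := by
  ext k l
  simp only [diagonal_mul, mul_diagonal, single_apply]
  split_ifs with hkl
  · obtain ⟨rfl, rfl⟩ := hkl
    rw [h, mul_comm]
  · simp

end Matrix

open Kronecker

set_option maxHeartbeats 1000000 in
/-- Each term `E a b c e` of `Rtrig` has `{c, e} = {a, b}` or exchanges `{0, 3}` with `{1, 2}`,
so it commutes with the diagonal weight `d a * d b`. -/
theorem Rtrig_commute_diagonal_kronecker (q α u : ℝ) {d : Fin 4 → ℂ}
    (h : d 0 * d 3 = d 1 * d 2) :
    Commute (diagonal d ⊗ₖ diagonal d) (Rtrig q α u) := by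
  rw [diagonal_kronecker_diagonal, Rtrig]
  repeat'
    first
    | apply Commute.add_right
    | apply Commute.sub_right
    | apply Commute.smul_right
    | exact commute_diagonal_single
        (by first | ring1 | linear_combination h | linear_combination -h) _

theorem Rtrig_commutes_with_gauge_general (q α : ℝ)
    (u : ℝ) :
    (∀ d : Fin 4 → ℂ, (∀ i, d i ≠ 0) → d 0 * d 3 = d 1 * d 2 →
      Rtrig q α u * (Matrix.diagonal d ⊗ₖ Matrix.diagonal d) =
        (Matrix.diagonal d ⊗ₖ Matrix.diagonal d) * Rtrig q α u) ∧
    (∀ r s v : ℝ, 0 < r → 0 < s →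
      Rtrig q α u *
          (Matrix.diagonal (![1, ((r ^ v : ℝ) : ℂ), ((s ^ v : ℝ) : ℂ), ((r ^ v * s ^ v : ℝ) : ℂ)]) ⊗ₖ
            Matrix.diagonal (![1, ((r ^ v : ℝ) : ℂ), ((s ^ v : ℝ) : ℂ), ((r ^ v * s ^ v : ℝ) : ℂ)])) =
        (Matrix.diagonal (![1, ((r ^ v : ℝ) : ℂ), ((s ^ v : ℝ) : ℂ), ((r ^ v * s ^ v : ℝ) : ℂ)]) ⊗ₖ
            Matrix.diagonal (![1, ((r ^ v : ℝ) : ℂ), ((s ^ v : ℝ) : ℂ), ((r ^ v * s ^ v : ℝ) : ℂ)])) *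
          Rtrig q α u) :=
  ⟨fun _ _ h => (Rtrig_commute_diagonal_kronecker q α u h).eq.symm,
    fun _ _ _ _ _ => (Rtrig_commute_diagonal_kronecker q α u (by simp)).eq.symm⟩

/-- The gauge-free trigonometric R matrix commutes with `D ⊗ D` for any invertible
diagonal `D = diag{d₁,d₂,d₃,d₄}` with `d₁d₄ = d₂d₃`; in particular it commutes with
`A^{r,s}(v) ⊗ A^{r,s}(v)` where `A^{r,s}(v) = diag{1, rᵛ, sᵛ, rᵛsᵛ}`. -/
theorem Rtrig_commutes_with_gauge (q α : ℝ) (hq : 1 < q) (hα : 0 < α)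
    (u : ℝ) (hu : u ≠ α ∧ u ≠ α + 1) :
    (∀ d : Fin 4 → ℂ, (∀ i, d i ≠ 0) → d 0 * d 3 = d 1 * d 2 →
      Rtrig q α u * (Matrix.diagonal d ⊗ₖ Matrix.diagonal d) =
        (Matrix.diagonal d ⊗ₖ Matrix.diagonal d) * Rtrig q α u) ∧
    (∀ r s v : ℝ, 0 < r → 0 < s →
      Rtrig q α u *
          (Matrix.diagonal (![1, ((r ^ v : ℝ) : ℂ), ((s ^ v : ℝ) : ℂ), ((r ^ v * s ^ v : ℝ) : ℂ)]) ⊗ₖ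
            Matrix.diagonal (![1, ((r ^ v : ℝ) : ℂ), ((s ^ v : ℝ) : ℂ), ((r ^ v * s ^ v : ℝ) : ℂ)])) =
        (Matrix.diagonal (![1, ((r ^ v : ℝ) : ℂ), ((s ^ v : ℝ) : ℂ), ((r ^ v * s ^ v : ℝ) : ℂ)]) ⊗ₖ
            Matrix.diagonal (![1, ((r ^ v : ℝ) : ℂ), ((s ^ v : ℝ) : ℂ), ((r ^ v * s ^ v : ℝ) : ℂ)])) *
          Rtrig q α u) :=
  Rtrig_commutes_with_gauge_general q α u
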